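/- arXiv:2107.11330 — 3 statements merged into one kernel-verified Lean document; each statement's English description precedes it below -/
import Mathlib

section
/- For every non-positive integer −n (n ∈ ℕ), the function K(z) = Γ(z) + (sin(2πz)/(2π))·Γ'(z) has a removable singularity at z = −n; that is, the limit of K(z) as z → −n exists and is finite. -/
/-!
With `s z = sin (2πz) / (2π)` we have `K = (s Γ)' + (1 - cos 2πz) Γ`. By the reflection formula
`Γ(z) Γ(1 - z) = π / sin (πz)`, both `s Γ = cos (πz) / Γ(1 - z)` and
`(1 - cos 2πz) Γ = 2π sin (πz) / Γ(1 - z)` are entire, so `K` agrees off the integers with an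
entire function, and the integers are isolated zeros of `sin (πz)`.
-/

open Complex Filter Topology

noncomputable def K (z : ℂ) : ℂ :=
  Complex.Gamma z + Complex.sin (2 * Real.pi * z) / (2 * Real.pi) * deriv Complex.Gamma z

open Set
open scoped Real

lemma eventually_sin_pi_mul_ne_zero (x : ℂ) : ∀ᶠ z in 𝓝[≠] x, sin (π * z) ≠ 0 := by
  refine not_frequently.1 fun h => ?_
  have hsin : AnalyticOnNhd ℂ (fun z : ℂ => sin (π * z)) univ :=
    (differentiable_sin.comp (differentiable_id.const_mul _)).differentiableOn.analyticOnNhd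
      isOpen_univ
  have := congr_fun (hsin.eq_of_frequently_eq analyticOnNhd_const h) (1 / 2)
  simp [← div_eq_mul_inv] at this

lemma Gamma_eq_pi_div_of_sin_ne_zero {z : ℂ} (hz : sin (π * z) ≠ 0) :
    Gamma z = π / sin (π * z) * (Gamma (1 - z))⁻¹ := by
  have hΓ : Gamma (1 - z) ≠ 0 := by
    refine right_ne_zero_of_mul (a := Gamma z) ?_
    rw [Gamma_mul_Gamma_one_sub]
    exact div_ne_zero (ofReal_ne_zero.2 Real.pi_ne_zero) hz
  rw [← Gamma_mul_Gamma_one_sub, mul_inv_cancel_right₀ hΓ]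

/-- The entire extension of `sin (2πz) / (2π) * Γ z`. -/
noncomputable def sinMulGammaExt (z : ℂ) : ℂ := cos (π * z) * (Gamma (1 - z))⁻¹

/-- The entire extension of `K`. -/
noncomputable def KExt (z : ℂ) : ℂ :=
  deriv sinMulGammaExt z + 2 * π * sin (π * z) * (Gamma (1 - z))⁻¹

lemma differentiable_sinMulGammaExt : Differentiable ℂ sinMulGammaExt :=
  (differentiable_cos.comp (differentiable_id.const_mul _)).mul
    (differentiable_one_div_Gamma.comp (differentiable_id.const_sub 1))

lemma continuous_KExt : Continuous KExt := by
  refine ((differentiable_sinMulGammaExt.contDiff (n := 1)).continuous_deriv le_rfl).add ?_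
  exact ((continuous_sin.comp (continuous_const_mul _)).const_mul _).mul
    (differentiable_one_div_Gamma.comp (differentiable_id.const_sub 1)).continuous

lemma sin_two_pi_mul_div_mul_Gamma {z : ℂ} (hz : sin (π * z) ≠ 0) :
    sin (2 * π * z) / (2 * π) * Gamma z = sinMulGammaExt z := by
  have hπ : (π : ℂ) ≠ 0 := ofReal_ne_zero.2 Real.pi_ne_zero
  rw [Gamma_eq_pi_div_of_sin_ne_zero hz, sinMulGammaExt, mul_assoc, sin_two_mul]
  field_simp

lemma one_sub_cos_two_pi_mul_mul_Gamma {z : ℂ} (hz : sin (π * z) ≠ 0) :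
    (1 - cos (2 * π * z)) * Gamma z = 2 * π * sin (π * z) * (Gamma (1 - z))⁻¹ := by
  rw [Gamma_eq_pi_div_of_sin_ne_zero hz, mul_assoc, cos_two_mul, cos_sq']
  field_simp
  ring

lemma hasDerivAt_sin_two_pi_mul_div (z : ℂ) :
    HasDerivAt (fun w => sin (2 * π * w) / (2 * π)) (cos (2 * π * z)) z := by
  have hπ : (2 * π : ℂ) ≠ 0 := by simp [Real.pi_ne_zero]
  simpa [hπ] using (((hasDerivAt_id z).const_mul (2 * π : ℂ)).csin).div_const (2 * π : ℂ)

lemma K_eq_KExt {z : ℂ} (hz : sin (π * z) ≠ 0) : K z = KExt z := by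
  have hpole : ∀ m : ℕ, z ≠ -m := by
    rintro m rfl
    exact hz (by simpa [mul_comm] using sin_int_mul_pi (-m))
  have hext : sinMulGammaExt =ᶠ[𝓝 z] fun w => sin (2 * π * w) / (2 * π) * Gamma w := by
    filter_upwards [(continuous_sin.comp (continuous_const_mul _)).isOpen_preimage _
      isOpen_ne |>.mem_nhds hz] with w hw
    exact (sin_two_pi_mul_div_mul_Gamma hw).symm
  have hderiv : deriv sinMulGammaExt z
      = cos (2 * π * z) * Gamma z + sin (2 * π * z) / (2 * π) * deriv Gamma z := by
    rw [hext.deriv_eq]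
    exact ((hasDerivAt_sin_two_pi_mul_div z).mul (differentiableAt_Gamma z hpole).hasDerivAt).deriv
  rw [K, KExt, hderiv, ← one_sub_cos_two_pi_mul_mul_Gamma hz]
  ring

lemma tendsto_K_nhdsNE (x : ℂ) : Tendsto K (𝓝[≠] x) (𝓝 (KExt x)) :=
  (continuous_KExt.tendsto x |>.mono_left nhdsWithin_le_nhds).congr'
    ((eventually_sin_pi_mul_ne_zero x).mono fun _ hz => (K_eq_KExt hz).symm)

theorem K_removable_singularity (n : ℕ) :
    ∃ c : ℂ, Tendsto K (𝓝[≠] (-(n : ℂ))) (𝓝 c) :=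
  ⟨_, tendsto_K_nhdsNE _⟩
end

section
/- The limit of K(z) = Γ(z) + (sin(2πz)/(2π))·Γ'(z) as z → 0 equals −γ, where γ is the Euler–Mascheroni constant. -/
/-!
With `s z = sin (2πz) / (2π)`, the functional equations `Γ (z + 1) = z Γ z` and
`Γ' (z + 1) = Γ z + z Γ' z` give, for `z ≠ 0`,
`K z = Γ (z + 1) (z - s z) / z² + (s z / z) Γ' (z + 1)`.
Since `sin w = w + O(w³)`, the first term tends to `0` and `s z / z → 1`, so `K z → Γ' 1 = -γ`.
-/

open Complex Filter Topology

namespace Complex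

lemma norm_exp_sub_quadratic_le {x : ℂ} (hx : ‖x‖ ≤ 1) :
    ‖exp x - (1 + x + x ^ 2 / 2)‖ ≤ ‖x‖ ^ 3 := by
  have h := exp_bound hx (n := 3) (by norm_num)
  norm_num [Finset.sum_range_succ, Nat.factorial] at h
  nlinarith [pow_nonneg (norm_nonneg x) 3]

lemma norm_sin_sub_self_le {w : ℂ} (hw : ‖w‖ ≤ 1) : ‖sin w - w‖ ≤ ‖w‖ ^ 3 := by
  set E : ℂ → ℂ := fun x => exp x - (1 + x + x ^ 2 / 2)
  have hsin : sin w - w = (E (-w * I) - E (w * I)) * I / 2 := by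
    simp only [E, sin]
    linear_combination (-w) * I_sq
  have hE : ∀ x : ℂ, ‖x‖ = ‖w‖ → ‖E x‖ ≤ ‖w‖ ^ 3 := fun x hx =>
    hx ▸ norm_exp_sub_quadratic_le (hx ▸ hw)
  calc ‖sin w - w‖ = ‖E (-w * I) - E (w * I)‖ / 2 := by simp [hsin]
    _ ≤ (‖E (-w * I)‖ + ‖E (w * I)‖) / 2 := by gcongr; exact norm_sub_le _ _
    _ ≤ (‖w‖ ^ 3 + ‖w‖ ^ 3) / 2 := by gcongr <;> exact hE _ (by simp)
    _ = ‖w‖ ^ 3 := by ring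

lemma tendsto_sub_sin_div_sq :
    Tendsto (fun w : ℂ => (w - sin w) / w ^ 2) (𝓝[≠] 0) (𝓝 0) := by
  refine squeeze_zero_norm' ?_ (tendsto_norm_zero.mono_left nhdsWithin_le_nhds)
  filter_upwards [nhdsWithin_le_nhds (Metric.closedBall_mem_nhds (0 : ℂ) one_pos),
    self_mem_nhdsWithin] with w hw hw0
  have hw_pos : 0 < ‖w‖ := norm_pos_iff.2 hw0
  rw [norm_div, norm_pow, norm_sub_rev, div_le_iff₀ (by positivity)]
  calc ‖sin w - w‖ ≤ ‖w‖ ^ 3 := norm_sin_sub_self_le (by simpa using hw)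
    _ = ‖w‖ * ‖w‖ ^ 2 := by ring

lemma tendsto_sin_div_self : Tendsto (fun w : ℂ => sin w / w) (𝓝[≠] 0) (𝓝 1) := by
  simpa [slope_fun_def_field, div_eq_inv_mul] using (hasDerivAt_sin 0).tendsto_slope

lemma tendsto_const_mul_nhdsNE {c : ℂ} (hc : c ≠ 0) :
    Tendsto (c * ·) (𝓝[≠] (0 : ℂ)) (𝓝[≠] 0) :=
  tendsto_nhdsWithin_of_tendsto_nhds_of_eventually_within _
    ((continuous_const_mul c).tendsto' 0 0 (mul_zero c) |>.mono_left nhdsWithin_le_nhds)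
    (eventually_mem_nhdsWithin.mono fun _ hz => mul_ne_zero hc hz)

lemma continuousAt_deriv_Gamma {s : ℂ} (hs : 0 < s.re) : ContinuousAt (deriv Gamma) s := by
  refine (analyticAt_iff_eventually_differentiableAt.2 ?_).deriv.continuousAt
  filter_upwards [(isOpen_lt continuous_const continuous_re).mem_nhds hs] with w hw
  refine differentiableAt_Gamma w fun m hm => ?_
  simp only [hm, neg_re, natCast_re] at hw
  linarith [m.cast_nonneg (α := ℝ)]

lemma Gamma_add_mul_deriv_Gamma {z : ℂ} (hz : z ≠ 0) (s : ℂ) :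
    Gamma z + s * deriv Gamma z
      = Gamma (z + 1) * ((z - s) / z ^ 2) + s / z * deriv Gamma (z + 1) := by
  rw [deriv_Gamma_add_one z hz, Gamma_add_one z hz]
  field_simp
  ring

end Complex

theorem K_limit_at_zero :
    Tendsto K (𝓝[≠] (0 : ℂ)) (𝓝 (-(Real.eulerMascheroniConstant : ℂ))) := by
  set c : ℂ := 2 * Real.pi with hc_def
  have hc : c ≠ 0 := by simp [c, Real.pi_ne_zero]
  have hcz := tendsto_const_mul_nhdsNE hc
  have hshift : Tendsto (· + 1) (𝓝[≠] (0 : ℂ)) (𝓝 1) :=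
    ((continuous_add_const 1).tendsto' 0 1 (zero_add 1)).mono_left nhdsWithin_le_nhds
  have hlim := ((continuousAt_Gamma_one.tendsto.comp hshift).mul
      (tendsto_const_nhds (x := c).mul (tendsto_sub_sin_div_sq.comp hcz))).add
    ((tendsto_sin_div_self.comp hcz).mul
      ((continuousAt_deriv_Gamma (s := 1) one_pos).tendsto.comp hshift))
  rw [Gamma_one, hasDerivAt_Gamma_one.deriv] at hlim
  refine (hlim.congr' ?_).trans (by simp)
  filter_upwards [self_mem_nhdsWithin] with z hz
  simp only [K, ← hc_def, Gamma_add_mul_deriv_Gamma hz, Function.comp_apply]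
  field_simp
end

section
/- For all z ∈ ℂ that are not non-positive integers (with z+1 also not a non-positive integer), K(z+1) = z·K(z) + cos(πz)/Γ(1−z). -/
open Complex

/-! Differentiating `Γ(s + 1) = s Γ(s)` gives `Γ'(s + 1) = Γ(s) + s Γ'(s)`, and
`sin (2π(z + 1)) = sin (2πz)`, so `K(z + 1) - z K(z) = sin (2πz) / (2π) · Γ(z)`.
Writing `sin (2πz) = 2 sin (πz) cos (πz)`, the reflection formula turns `sin (πz) / π · Γ(z)`
into `1 / Γ(1 - z)`. -/

/-- At positive integers `z` both sides vanish, the left one by the convention `0⁻¹ = 0`. -/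
theorem Complex.inv_Gamma_one_sub {z : ℂ} (hz : ∀ m : ℕ, z ≠ -m) :
    (Gamma (1 - z))⁻¹ = sin (Real.pi * z) / Real.pi * Gamma z := by
  have hG : Gamma z ≠ 0 := Gamma_ne_zero hz
  calc (Gamma (1 - z))⁻¹ = Gamma z * (Gamma z * Gamma (1 - z))⁻¹ := by
        rw [mul_inv, mul_inv_cancel_left₀ hG]
    _ = sin (Real.pi * z) / Real.pi * Gamma z := by
        rw [Gamma_mul_Gamma_one_sub, inv_div, mul_comm]

theorem K_recurrence_reflection_general (z : ℂ) (hz : ∀ m : ℕ, z ≠ -(m : ℂ)) :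
    K (z + 1) = z * K z + Complex.cos (Real.pi * z) / Complex.Gamma (1 - z) := by
  have hz0 : z ≠ 0 := by simpa using hz 0
  have hsin_periodic : sin (2 * Real.pi * (z + 1)) = sin (2 * Real.pi * z) := by
    rw [mul_add, mul_one, sin_add_two_pi]
  have hsin_double : sin (2 * Real.pi * z) = 2 * sin (Real.pi * z) * cos (Real.pi * z) := by
    rw [mul_assoc, sin_two_mul]
  have hπ : (Real.pi : ℂ) ≠ 0 := ofReal_ne_zero.mpr Real.pi_ne_zero
  rw [K, K, Gamma_add_one z hz0, deriv_Gamma_add_one z hz0, hsin_periodic,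
    div_eq_mul_inv (cos _), inv_Gamma_one_sub hz, hsin_double]
  field_simp
  ring

theorem K_recurrence_reflection (z : ℂ) (hz : ∀ m : ℕ, z ≠ -(m : ℂ))
    (hz1 : ∀ m : ℕ, z + 1 ≠ -(m : ℂ)) :
    K (z + 1) = z * K z + Complex.cos (Real.pi * z) / Complex.Gamma (1 - z) :=
  K_recurrence_reflection_general z hz
end
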